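/- arXiv:1706.03606 — 7 statements merged into one kernel-verified Lean document; each statement's English description precedes it below -/
import Mathlib

section
/- Let A be an n×n pairwise comparison matrix, let w be a positive vector and λ a real number with A·w = λ·w, and let Â be the pairwise comparison matrix obtained from A by a transformation of row multiplication on alternative i by a factor α > 0. Define the vector ŵ by ŵ_i = α·w_i and ŵ_j = w_j for all j ≠ i. Then ŵ is a positive vector satisfying Â·ŵ = λ·ŵ. (Consequently, the Eigenvector Method is invariant to row multiplication: the Perron weight of alternative i relative to every other alternative is multiplied by α.) -/
/-- A pairwise comparison matrix: all entries positive and `A j i = 1 / A i j`. -/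
def IsPCM {n : ℕ} (A : Matrix (Fin n) (Fin n) ℝ) : Prop :=
  (∀ i j, 0 < A i j) ∧ ∀ i j, A j i = 1 / A i j

/-- Transformation of row multiplication on alternative `i` by factor `α`. -/
noncomputable def rowMul {n : ℕ} (A : Matrix (Fin n) (Fin n) ℝ) (i : Fin n) (α : ℝ) :
    Matrix (Fin n) (Fin n) ℝ :=
  Matrix.of fun k l =>
    if k = i ∧ l ≠ i then α * A k l
    else if l = i ∧ k ≠ i then A k l / α
    else A k l

/-!
Row multiplication on alternative `i` by `α` is the diagonal similarity `A ↦ D A D⁻¹` with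
`D = diag(1, …, α, …, 1)` (`α` in position `i`); similarity by `D` maps an eigenvector `w` to `D w`
with the same eigenvalue, and `D w` is the vector `ŵ`.
-/

open Matrix

theorem Matrix.diagonal_mul_mul_diagonal_inv_mulVec {ι R : Type*} [Fintype ι] [DecidableEq ι]
    [Field R] (A : Matrix ι ι R) {d : ι → R} (hd : ∀ k, d k ≠ 0) (w : ι → R) :
    (diagonal d * A * diagonal d⁻¹) *ᵥ (d * w) = d * (A *ᵥ w) := by
  have hw : diagonal d⁻¹ *ᵥ (d * w) = w := by
    funext k
    simp [mulVec_diagonal, hd k]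
  rw [← mulVec_mulVec, hw, ← mulVec_mulVec]
  funext k
  simp [mulVec_diagonal]

theorem rowMul_eq_diagonal_mul_mul_diagonal_inv {n : ℕ} (A : Matrix (Fin n) (Fin n) ℝ)
    (i : Fin n) {α : ℝ} (hα : α ≠ 0) :
    rowMul A i α = diagonal (Pi.mulSingle i α) * A * diagonal (Pi.mulSingle i α)⁻¹ := by
  ext k l
  by_cases hk : k = i <;> by_cases hl : l = i <;>
    simp [rowMul, diagonal_mul, mul_diagonal, hk, hl, div_eq_mul_inv]
  field_simp

theorem eigenvector_of_rowMul_general {n : ℕ} (A : Matrix (Fin n) (Fin n) ℝ)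
    (i : Fin n) (α : ℝ) (hα : 0 < α)
    (w : Fin n → ℝ) (hw : ∀ j, 0 < w j) (lam : ℝ)
    (heig : A.mulVec w = lam • w) :
    (∀ j, 0 < (fun j => if j = i then α * w j else w j) j) ∧
      (rowMul A i α).mulVec (fun j => if j = i then α * w j else w j) =
        lam • (fun j => if j = i then α * w j else w j) := by
  have hŵ : (fun j => if j = i then α * w j else w j) = Pi.mulSingle i α * w := by
    funext j
    by_cases h : j = i <;> simp [h]
  have hd : ∀ k, 0 < (Pi.mulSingle i α : Fin n → ℝ) k := by
    intro k
    by_cases h : k = i <;> simp [h, hα]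
  refine ⟨fun j => hŵ ▸ mul_pos (hd j) (hw j), ?_⟩
  rw [hŵ, rowMul_eq_diagonal_mul_mul_diagonal_inv A i hα.ne',
    diagonal_mul_mul_diagonal_inv_mulVec A (fun k => (hd k).ne') w, heig, mul_smul_comm]

/-- If `w` is a positive eigenvector of a pairwise comparison matrix `A` with
eigenvalue `lam`, then the vector `ŵ` with `ŵ i = α * w i` and `ŵ j = w j` for `j ≠ i`
is a positive eigenvector of the row-multiplied matrix `rowMul A i α` with the same
eigenvalue. -/
theorem eigenvector_of_rowMul {n : ℕ} (A : Matrix (Fin n) (Fin n) ℝ)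
    (hA : IsPCM A) (i : Fin n) (α : ℝ) (hα : 0 < α)
    (w : Fin n → ℝ) (hw : ∀ j, 0 < w j) (lam : ℝ)
    (heig : A.mulVec w = lam • w) :
    (∀ j, 0 < (fun j => if j = i then α * w j else w j) j) ∧
      (rowMul A i α).mulVec (fun j => if j = i then α * w j else w j) =
        lam • (fun j => if j = i then α * w j else w j) :=
  eigenvector_of_rowMul_general A i α hα w hw lam heig
end

section
/- Let g be a ranking method on n×n pairwise comparison matrices that satisfies anonymity and aggregation invariance. Then g satisfies inversion: for every pairwise comparison matrix A and all alternatives i, j, one has i ⪰_A j if and only if j ⪰_{A⁻} i, where A⁻ is the opposite of A. -/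
/-- The pairwise comparison matrix obtained by relabeling the alternatives
according to the permutation `σ`: `(permPCM σ A) i j = A (σ i) (σ j)`. -/
def permPCM {n : ℕ} (σ : Equiv.Perm (Fin n)) (A : Matrix (Fin n) (Fin n) ℝ) :
    Matrix (Fin n) (Fin n) ℝ :=
  Matrix.of fun i j => A (σ i) (σ j)

/-- The aggregate (entrywise geometric mean) of the pairwise comparison matrices
`A 0, …, A (k-1)`. -/
noncomputable def agg {n k : ℕ} (A : Fin k → Matrix (Fin n) (Fin n) ℝ) :
    Matrix (Fin n) (Fin n) ℝ :=
  Matrix.of fun i j => (∏ ℓ, A ℓ i j) ^ ((1 : ℝ) / k)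

/-- The opposite of a pairwise comparison matrix: all preferences are reversed. -/
noncomputable def opp {n : ℕ} (A : Matrix (Fin n) (Fin n) ℝ) :
    Matrix (Fin n) (Fin n) ℝ :=
  Matrix.of fun i j => 1 / A i j

/-- A ranking method (assigning to every pairwise comparison matrix a complete and
transitive relation on the alternatives) satisfying anonymity and aggregation
invariance also satisfies inversion: `i ⪰_A j` iff `j ⪰_{A⁻} i`. -/
theorem ano_ai_implies_inv {n : ℕ}
    (g : Matrix (Fin n) (Fin n) ℝ → Fin n → Fin n → Prop)
    (hComplete : ∀ A, IsPCM A → ∀ i j, g A i j ∨ g A j i)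
    (hTrans : ∀ A, IsPCM A → ∀ i j k, g A i j → g A j k → g A i k)
    (hAnon : ∀ A, IsPCM A → ∀ σ : Equiv.Perm (Fin n), ∀ i j,
      g A i j ↔ g (permPCM σ A) (σ i) (σ j))
    (hAI : ∀ k : ℕ, 0 < k → ∀ A : Fin k → Matrix (Fin n) (Fin n) ℝ,
      (∀ ℓ, IsPCM (A ℓ)) → ∀ i j : Fin n, (∀ ℓ, g (A ℓ) i j) →
        g (agg A) i j ∧ ((∃ ℓ, ¬ g (A ℓ) j i) → ¬ g (agg A) j i)) :
    ∀ A, IsPCM A → ∀ i j, g A i j ↔ g (opp A) j i := by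
  intro A hA i j
  have hApos := hA.1
  have hArec := hA.2
  -- opp A is a PCM
  have hOpp : IsPCM (opp A) := by
    constructor
    · intro i j
      simp only [opp, Matrix.of_apply]
      exact one_div_pos.mpr (hApos i j)
    · intro i j
      simp only [opp, Matrix.of_apply]
      rw [hArec i j]
  -- the aggregate of A and opp A is the all-ones matrix
  set A2 : Fin 2 → Matrix (Fin n) (Fin n) ℝ := ![A, opp A] with hA2
  have hA2pcm : ∀ ℓ, IsPCM (A2 ℓ) := by
    intro ℓ
    fin_cases ℓ <;> simpa [hA2] using (by first | exact hA | exact hOpp : IsPCM _)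
  have haggJ : ∀ p q : Fin n, agg A2 p q = 1 := by
    intro p q
    simp only [agg, Matrix.of_apply, Fin.prod_univ_two, hA2, Matrix.cons_val_zero,
      Matrix.cons_val_one, Matrix.head_cons, opp]
    rw [mul_one_div, div_self (ne_of_gt (hApos p q))]
    simp
  have hJpcm : IsPCM (agg A2) := by
    constructor
    · intro p q; rw [haggJ]; norm_num
    · intro p q; rw [haggJ, haggJ]; norm_num
  -- on the all-ones matrix everything is indifferent
  have hJall : ∀ p q : Fin n, g (agg A2) p q := by
    intro p q
    have hperm : permPCM (Equiv.swap p q) (agg A2) = agg A2 := by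
      ext a b
      simp [permPCM, haggJ]
    have hiff := hAnon (agg A2) hJpcm (Equiv.swap p q) p q
    rw [hperm, Equiv.swap_apply_left, Equiv.swap_apply_right] at hiff
    rcases hComplete (agg A2) hJpcm p q with h | h
    · exact h
    · exact hiff.mpr h
  constructor
  · intro hgA
    by_contra hnot
    have hgO : g (opp A) i j := (hComplete (opp A) hOpp i j).resolve_right hnot
    have hall : ∀ ℓ, g (A2 ℓ) i j := by
      intro ℓ; fin_cases ℓ <;> simpa [hA2] using (by assumption : _)
    have := (hAI 2 (by norm_num) A2 hA2pcm i j hall).2 ⟨1, by simpa [hA2] using hnot⟩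
    exact this (hJall j i)
  · intro hgO
    by_contra hnot
    have hgA : g A j i := (hComplete A hA i j).resolve_left hnot
    have hall : ∀ ℓ, g (A2 ℓ) j i := by
      intro ℓ; fin_cases ℓ <;> simpa [hA2] using (by assumption : _)
    have := (hAI 2 (by norm_num) A2 hA2pcm j i hall).2 ⟨0, by simpa [hA2] using hnot⟩
    exact this (hJall i j)
end

section
/- There exists a 5×5 pairwise comparison matrix A (namely the matrix with rows (1, 1, 3, 9, 9), (1, 1, 5, 8, 5), (1/3, 1/5, 1, 9, 5), (1/9, 1/8, 1/9, 1, 1), (1/9, 1/5, 1/5, 1, 1)), positive vectors w and v, and real numbers λ, μ such that A·w = λ·w and A⁻·v = μ·v, with w_1 < w_2 and v_1 < v_2. Hence the Eigenvector Method violates inversion: alternative 2 is strictly preferred to alternative 1 both in A and in its opposite A⁻. -/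
/-- The 5×5 pairwise comparison matrix of Dodd, Donegan and McMaster. -/
noncomputable def DDM : Matrix (Fin 5) (Fin 5) ℝ :=
  !![1,   1,   3,   9, 9;
     1,   1,   5,   8, 5;
     1/3, 1/5, 1,   9, 5;
     1/9, 1/8, 1/9, 1, 1;
     1/9, 1/5, 1/5, 1, 1]

/-- The characteristic polynomial of `DDM`, as a real function. -/
noncomputable def ddmCP : ℝ → ℝ :=
  fun x => x^5 - 5*x^4 - (707/72)*x^2 - (763/1350)*x - 319/810

/-- The Perron root of `DDM` lies between 5.347 and 5.348. -/
lemma ddm_root : ∃ l : ℝ, (5347/1000 : ℝ) ≤ l ∧ l ≤ 5348/1000 ∧ ddmCP l = 0 := by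
  have hab : (5347/1000 : ℝ) ≤ 5348/1000 := by norm_num
  have hcont : ContinuousOn ddmCP (Set.Icc (5347/1000 : ℝ) (5348/1000)) := by
    apply Continuous.continuousOn
    unfold ddmCP
    continuity
  have hmem : (0 : ℝ) ∈ Set.Icc (ddmCP (5347/1000)) (ddmCP (5348/1000)) := by
    constructor <;> (unfold ddmCP; norm_num)
  obtain ⟨l, hl, hl0⟩ := intermediate_value_Icc hab hcont hmem
  exact ⟨l, hl.1, hl.2, hl0⟩

set_option maxHeartbeats 1000000 in
/-- The Eigenvector Method violates inversion: for the 5×5 pairwise comparison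
matrix `DDM`, the positive (Perron) eigenvector of `DDM` ranks alternative 2
strictly above alternative 1, and so does the positive (Perron) eigenvector of
its opposite. -/
theorem em_violates_inversion_five :
    IsPCM DDM ∧
      ∃ (w v : Fin 5 → ℝ) (lam mu : ℝ),
        (∀ i, 0 < w i) ∧ (∀ i, 0 < v i) ∧
        DDM.mulVec w = lam • w ∧ (opp DDM).mulVec v = mu • v ∧
        w 0 < w 1 ∧ v 0 < v 1 := by
  constructor
  · constructor
    · intro i j; fin_cases i <;> fin_cases j <;> norm_num [DDM]
    · intro i j; fin_cases i <;> fin_cases j <;> norm_num [DDM]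
  · obtain ⟨l, hl1, hl2, hp⟩ := ddm_root
    have hp' : l^5 - 5*l^4 - (707/72)*l^2 - (763/1350)*l - 319/810 = 0 := hp
    have b2l : (2859/100 : ℝ) ≤ l^2 := by nlinarith [sq_nonneg (l - 5347/1000)]
    have b2u : l^2 ≤ (2861/100 : ℝ) := by
      nlinarith [mul_nonneg (by linarith : (0:ℝ) ≤ 5348/1000 - l)
        (by linarith : (0:ℝ) ≤ l - 5347/1000)]
    have b3l : (152 : ℝ) ≤ l^3 := by
      nlinarith [mul_nonneg (by linarith : (0:ℝ) ≤ l^2 - 2859/100)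
        (by linarith : (0:ℝ) ≤ l - 5347/1000)]
    have b3u : l^3 ≤ (154 : ℝ) := by
      nlinarith [mul_nonneg (by linarith : (0:ℝ) ≤ 5348/1000 - l) (sq_nonneg l)]
    have b4l : (817 : ℝ) ≤ l^4 := by nlinarith [sq_nonneg (l^2 - 2859/100)]
    have b4u : l^4 ≤ (819 : ℝ) := by
      nlinarith [mul_nonneg (by linarith : (0:ℝ) ≤ 2861/100 - l^2)
        (by nlinarith [sq_nonneg l] : (0:ℝ) ≤ l^2 + 2861/100)]
    refine ⟨![l^4 - 4*l^3 - (91/12)*l - 74/75,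
              l^3 + (1/9)*l^2 + (98/27)*l - 88/405,
              (1/3)*l^3 + (34/45)*l^2 + (11/24)*l + 11/60,
              (1/9)*l^3 - (13/216)*l^2 + (133/1620)*l - 199/2025,
              (1/9)*l^3 + (2/45)*l^2 + (851/5400)*l + 1739/8100],
            ![l^4 - 4*l^3 - (91/12)*l - 74/75,
              l^3 + (21/40)*l^2 + (281/100)*l + 29/45,
              3*l^3 - (6/5)*l^2 + (1337/360)*l - 29/60,
              9*l^3 + 17*l^2 + (62/5)*l + 392/25,
              9*l^3 + 2*l^2 + (125/8)*l - 1369/180], l, l, ?_, ?_, ?_, ?_, ?_, ?_⟩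
    · intro i; fin_cases i <;> simp <;> linarith
    · intro i; fin_cases i <;> simp <;> linarith
    · funext i
      fin_cases i <;>
        simp [DDM, Matrix.mulVec, dotProduct, Fin.sum_univ_five] <;>
        first
        | ring1
        | linear_combination -hp'
    · funext i
      fin_cases i <;>
        simp [DDM, opp, Matrix.mulVec, dotProduct, Fin.sum_univ_five] <;>
        first
        | ring1
        | linear_combination -hp'
    · simp; linarith
    · simp; linarith
end

section
/- There exist two 4×4 pairwise comparison matrices A⁽¹⁾ and A⁽²⁾, positive vectors w⁽¹⁾, w⁽²⁾, u and real numbers λ⁽¹⁾, λ⁽²⁾, μ with A⁽¹⁾·w⁽¹⁾ = λ⁽¹⁾·w⁽¹⁾, A⁽²⁾·w⁽²⁾ = λ⁽²⁾·w⁽²⁾ and (A⁽¹⁾ ⊕ A⁽²⁾)·u = μ·u, such that alternative 2 has the strictly largest weight in both individual matrices (w⁽ℓ⁾_2 > w⁽ℓ⁾_j for all j ≠ 2 and ℓ = 1, 2), yet alternative 2 does not have the strictly largest weight in the aggregate (there is j ≠ 2 with u_j ≥ u_2). Hence the Eigenvector Method violates group-coherence for choice. -/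
/-- The aggregate (entrywise geometric mean) of two pairwise comparison matrices. -/
noncomputable def agg2 {n : ℕ} (A B : Matrix (Fin n) (Fin n) ℝ) :
    Matrix (Fin n) (Fin n) ℝ :=
  Matrix.of fun i j => Real.sqrt (A i j * B i j)

/-- The explicit counterexample matrix. -/
noncomputable def cexA : Matrix (Fin 4) (Fin 4) ℝ :=
  !![1, 12250/10047, 572/197, 139/394;
     10047/12250, 1, 7293/24500, 21267/6125;
     197/572, 24500/7293, 1, 417/572;
     394/139, 6125/21267, 572/417, 1]

/-- The Eigenvector Method violates group-coherence for choice: there are two 4×4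
pairwise comparison matrices in which alternative 2 (index 1) has the strictly
largest Perron weight, yet in the aggregate matrix alternative 2 does not have
the strictly largest weight. -/
theorem em_violates_group_coherence :
    ∃ (A₁ A₂ : Matrix (Fin 4) (Fin 4) ℝ) (w₁ w₂ u : Fin 4 → ℝ)
      (lam₁ lam₂ mu : ℝ),
      IsPCM A₁ ∧ IsPCM A₂ ∧
      (∀ i, 0 < w₁ i) ∧ (∀ i, 0 < w₂ i) ∧ (∀ i, 0 < u i) ∧
      A₁.mulVec w₁ = lam₁ • w₁ ∧ A₂.mulVec w₂ = lam₂ • w₂ ∧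
      (agg2 A₁ A₂).mulVec u = mu • u ∧
      (∀ j : Fin 4, j ≠ 1 → w₁ j < w₁ 1) ∧
      (∀ j : Fin 4, j ≠ 1 → w₂ j < w₂ 1) ∧
      (∃ j : Fin 4, j ≠ 1 ∧ u 1 ≤ u j) := by
  refine ⟨cexA, cexA.transpose,
    ![50, 51, 50, 50], ![301410, 343000, 320892, 340272], fun _ => 1,
    11/2, 11/2, 4, ?_, ?_, ?_, ?_, ?_, ?_, ?_, ?_, ?_, ?_, ?_⟩
  · constructor
    · intro i j
      fin_cases i <;> fin_cases j <;> norm_num [cexA]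
    · intro i j
      fin_cases i <;> fin_cases j <;> norm_num [cexA]
  · constructor
    · intro i j
      fin_cases i <;> fin_cases j <;> norm_num [cexA]
    · intro i j
      fin_cases i <;> fin_cases j <;> norm_num [cexA, Matrix.transpose_apply]
  · intro i; fin_cases i <;> norm_num
  · intro i; fin_cases i <;> norm_num
  · intro i; norm_num
  · funext i
    fin_cases i <;>
      simp [cexA, Matrix.mulVec, dotProduct, Fin.sum_univ_four] <;>
      norm_num
  · funext i
    fin_cases i <;>
      simp [cexA, Matrix.mulVec, dotProduct, Fin.sum_univ_four,
        Matrix.transpose_apply] <;>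
      norm_num
  · have h1 : agg2 cexA cexA.transpose = Matrix.of fun _ _ => (1:ℝ) := by
      ext i j
      simp only [agg2, Matrix.of_apply, Matrix.transpose_apply]
      rw [show Real.sqrt (cexA i j * cexA j i) = Real.sqrt 1 from ?_, Real.sqrt_one]
      congr 1
      fin_cases i <;> fin_cases j <;> norm_num [cexA]
    rw [h1]
    funext i
    simp [Matrix.mulVec, dotProduct, Fin.sum_univ_four]
  · intro j hj; fin_cases j <;> simp_all <;> try norm_num
  · intro j hj; fin_cases j <;> simp_all <;> try norm_num
  · exact ⟨0, by norm_num, le_refl 1⟩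
end

section
/- Let A be a 3×3 pairwise comparison matrix and let g be the vector of geometric means of its rows, g_i = (a_{i1}·a_{i2}·a_{i3})^{1/3}. Then g is a positive eigenvector of A, i.e. there exists λ with A·g = λ·g. (Consequently, for three alternatives the Eigenvector Method coincides with the Logarithmic Least Squares / geometric mean method.) -/
/-!
Rescale a pairwise comparison matrix `A` by the vector `g` of its row geometric means, i.e. pass to
the error matrix `E i j = A i j * g j / g i`. It is again a pairwise comparison matrix, and since
`∏ i, g i = 1` every row of `E` has product `1`. For `n = 3` this forces
`E = [[1, x, 1/x], [1/x, 1, x], [x, 1/x, 1]]`, whose row sums all equal `1 + x + 1/x`; equal row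
sums of `E` say exactly that `g` is an eigenvector of `A`.
-/

open Finset

noncomputable def rowGeomMean {n : ℕ} (A : Matrix (Fin n) (Fin n) ℝ) (i : Fin n) : ℝ :=
  (∏ j, A i j) ^ ((1 : ℝ) / n)

noncomputable def errorMatrix {n : ℕ} (A : Matrix (Fin n) (Fin n) ℝ) (w : Fin n → ℝ) :
    Matrix (Fin n) (Fin n) ℝ :=
  Matrix.of fun i j => A i j * w j / w i

theorem Matrix.mulVec_eq_smul_of_forall_sum_div_eq {ι : Type*} [Fintype ι]
    (A : Matrix ι ι ℝ) {w : ι → ℝ} (hw : ∀ i, w i ≠ 0) {lam : ℝ}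
    (h : ∀ i, ∑ j, A i j * w j / w i = lam) : A.mulVec w = lam • w := by
  funext i
  rw [Pi.smul_apply, smul_eq_mul, ← h i, ← Finset.sum_div, div_mul_cancel₀ _ (hw i)]
  rfl

namespace IsPCM

variable {n : ℕ} {A : Matrix (Fin n) (Fin n) ℝ}

theorem diag_eq_one (hA : IsPCM A) (i : Fin n) : A i i = 1 := by
  have hpos := hA.1 i i
  have hsq : A i i * A i i = 1 := by
    nth_rewrite 1 [hA.2 i i]
    exact one_div_mul_cancel hpos.ne'
  exact (mul_self_eq_one_iff.mp hsq).resolve_right (by linarith)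

theorem prod_prod_eq_one (hA : IsPCM A) : ∏ i, ∏ j, A i j = 1 := by
  set P := ∏ i, ∏ j, A i j
  have hP : 0 < P := prod_pos fun i _ => prod_pos fun j _ => hA.1 i j
  have hinv : P = P⁻¹ := by
    calc P = ∏ i, ∏ j, A j i := Finset.prod_comm
      _ = ∏ i, ∏ j, (A i j)⁻¹ := by
        refine prod_congr rfl fun i _ => prod_congr rfl fun j _ => ?_
        rw [hA.2 i j, one_div]
      _ = P⁻¹ := by simp only [prod_inv_distrib, P]
  have hsq : P * P = 1 := by
    nth_rewrite 2 [hinv]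
    exact mul_inv_cancel₀ hP.ne'
  exact (mul_self_eq_one_iff.mp hsq).resolve_right (by linarith)

theorem rowGeomMean_pos (hA : IsPCM A) (i : Fin n) : 0 < rowGeomMean A i :=
  Real.rpow_pos_of_pos (prod_pos fun j _ => hA.1 i j) _

theorem rowGeomMean_pow (hA : IsPCM A) (i : Fin n) : rowGeomMean A i ^ n = ∏ j, A i j := by
  rw [rowGeomMean, one_div]
  exact Real.rpow_inv_natCast_pow (prod_pos fun j _ => hA.1 i j).le i.pos.ne'

theorem prod_rowGeomMean (hA : IsPCM A) : ∏ i, rowGeomMean A i = 1 := by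
  simp only [rowGeomMean]
  rw [Real.finsetProd_rpow univ (fun i => ∏ j, A i j)
    fun i _ => (prod_pos fun j _ => hA.1 i j).le, hA.prod_prod_eq_one, Real.one_rpow]

theorem errorMatrix_isPCM (hA : IsPCM A) {w : Fin n → ℝ} (hw : ∀ i, 0 < w i) :
    IsPCM (errorMatrix A w) := by
  refine ⟨fun i j => ?_, fun i j => ?_⟩
  · exact div_pos (mul_pos (hA.1 i j) (hw j)) (hw i)
  · have hAij := (hA.1 i j).ne'
    have hwi := (hw i).ne'
    have hwj := (hw j).ne'
    simp only [errorMatrix, Matrix.of_apply, hA.2 i j]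
    field_simp

theorem prod_errorMatrix_rowGeomMean (hA : IsPCM A) (i : Fin n) :
    ∏ j, errorMatrix A (rowGeomMean A) i j = 1 := by
  simp only [errorMatrix, Matrix.of_apply, prod_div_distrib, prod_mul_distrib, prod_const,
    card_univ, Fintype.card_fin, hA.prod_rowGeomMean, mul_one, ← hA.rowGeomMean_pow]
  exact div_self (pow_pos (hA.rowGeomMean_pos i) n).ne'

end IsPCM

theorem IsPCM.sum_row_eq_of_prod_row_eq_one {E : Matrix (Fin 3) (Fin 3) ℝ} (hE : IsPCM E)
    (hprod : ∀ i, ∏ j, E i j = 1) (i : Fin 3) : ∑ j, E i j = ∑ j, E 0 j := by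
  have h0 := hprod 0
  have h1 := hprod 1
  simp only [Fin.prod_univ_three, hE.diag_eq_one, one_mul, mul_one, hE.2 0 1] at h0 h1
  have hE01 := (hE.1 0 1).ne'
  have h02 : E 0 2 = (E 0 1)⁻¹ := eq_inv_of_mul_eq_one_right h0
  have h12 : E 1 2 = E 0 1 := by field_simp at h1; exact h1
  match i with
  | 0 => rfl
  | 1 =>
    simp only [Fin.sum_univ_three, hE.diag_eq_one, hE.2 0 1, h02, h12]
    ring
  | 2 =>
    simp only [Fin.sum_univ_three, hE.diag_eq_one, hE.2 0 2, hE.2 1 2, h02, h12]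
    field_simp
    ring

/-- For a 3×3 pairwise comparison matrix, the vector of row geometric means is a
positive eigenvector: the Eigenvector Method coincides with the geometric mean
(Logarithmic Least Squares) method for three alternatives. -/
theorem geomMean_is_eigenvector_three (A : Matrix (Fin 3) (Fin 3) ℝ)
    (hA : IsPCM A) :
    (∀ i, 0 < (fun i => (A i 0 * A i 1 * A i 2) ^ ((1 : ℝ) / 3)) i) ∧
      ∃ lam : ℝ,
        A.mulVec (fun i => (A i 0 * A i 1 * A i 2) ^ ((1 : ℝ) / 3)) =
          lam • (fun i => (A i 0 * A i 1 * A i 2) ^ ((1 : ℝ) / 3)) := by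
  have hg : (fun i => (A i 0 * A i 1 * A i 2) ^ ((1 : ℝ) / 3)) = rowGeomMean A := by
    funext i
    simp [rowGeomMean, Fin.prod_univ_three]
  rw [hg]
  refine ⟨hA.rowGeomMean_pos, ∑ j, errorMatrix A (rowGeomMean A) 0 j,
    A.mulVec_eq_smul_of_forall_sum_div_eq (fun i => (hA.rowGeomMean_pos i).ne') fun i => ?_⟩
  exact (hA.errorMatrix_isPCM hA.rowGeomMean_pos).sum_row_eq_of_prod_row_eq_one
    hA.prod_errorMatrix_rowGeomMean i
end

section
/- Let f be a weighting method on n×n pairwise comparison matrices (assigning to each pairwise comparison matrix a positive vector summing to one) that is invariant to row multiplication. Then f satisfies aggregation invariance if and only if f satisfies group-coherence for choice. -/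
/-- Aggregation invariance of a weighting method `f`. -/
def AggregationInvariant {n : ℕ} (f : Matrix (Fin n) (Fin n) ℝ → Fin n → ℝ) : Prop :=
  ∀ k : ℕ, 0 < k → ∀ A : Fin k → Matrix (Fin n) (Fin n) ℝ,
    (∀ ℓ, IsPCM (A ℓ)) → ∀ i j : Fin n, (∀ ℓ, f (A ℓ) j ≤ f (A ℓ) i) →
      f (agg A) j ≤ f (agg A) i ∧
      ((∃ ℓ, f (A ℓ) j < f (A ℓ) i) → f (agg A) j < f (agg A) i)

/-- Group-coherence for choice of a weighting method `f`. -/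
def GroupCoherent {n : ℕ} (f : Matrix (Fin n) (Fin n) ℝ → Fin n → ℝ) : Prop :=
  ∀ k : ℕ, 0 < k → ∀ A : Fin k → Matrix (Fin n) (Fin n) ℝ,
    (∀ ℓ, IsPCM (A ℓ)) → ∀ i : Fin n, (∀ ℓ, ∀ j : Fin n, f (A ℓ) j ≤ f (A ℓ) i) →
      (∀ j : Fin n, f (agg A) j ≤ f (agg A) i) ∧
      ((∃ ℓ, ∀ j : Fin n, j ≠ i → f (A ℓ) j < f (A ℓ) i) →
        ∀ j : Fin n, j ≠ i → f (agg A) j < f (agg A) i)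

/-!
Group-coherence is aggregation invariance for a pair `(i, j)` in which `i` is a best alternative
of every matrix. To reduce the general case to it, multiply rows `i` and `j` of every matrix by
the same large `α`: by invariance to row multiplication this keeps `f_j / f_i` but divides every
other `f_m / f_i` by `α`, so `i` becomes a best alternative everywhere. Row multiplication commutes
with aggregation, so the aggregate undergoes the same transformation and keeps its `f_j / f_i`.
-/

section

variable {n : ℕ}

theorem isPCM_rowMul {A : Matrix (Fin n) (Fin n) ℝ} (hA : IsPCM A) (i : Fin n) {α : ℝ}
    (hα : 0 < α) : IsPCM (rowMul A i α) := by
  obtain ⟨hpos, hrecip⟩ := hA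
  refine ⟨fun k l => ?_, fun k l => ?_⟩
  · have hkl := hpos k l
    simp only [rowMul, Matrix.of_apply]
    split_ifs <;> positivity
  · simp only [rowMul, Matrix.of_apply, hrecip k l]
    split_ifs <;> first | (exfalso; tauto) | field_simp

theorem isPCM_agg {k : ℕ} {A : Fin k → Matrix (Fin n) (Fin n) ℝ} (hA : ∀ ℓ, IsPCM (A ℓ)) :
    IsPCM (agg A) := by
  have hprod : ∀ i j : Fin n, 0 < ∏ ℓ, A ℓ i j := fun i j =>
    Finset.prod_pos fun ℓ _ => (hA ℓ).1 i j
  refine ⟨fun i j => Real.rpow_pos_of_pos (hprod i j) _, fun i j => ?_⟩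
  have hinv : ∏ ℓ, A ℓ j i = (∏ ℓ, A ℓ i j)⁻¹ := by
    rw [← Finset.prod_inv_distrib]
    exact Finset.prod_congr rfl fun ℓ _ => by rw [(hA ℓ).2 i j, one_div]
  simp only [agg, Matrix.of_apply, hinv, Real.inv_rpow (hprod i j).le, one_div]

theorem agg_rowMul {k : ℕ} (hk : 0 < k) {A : Fin k → Matrix (Fin n) (Fin n) ℝ}
    (hA : ∀ ℓ, IsPCM (A ℓ)) (m : Fin n) {α : ℝ} (hα : 0 < α) :
    agg (fun ℓ => rowMul (A ℓ) m α) = rowMul (agg A) m α := by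
  have hroot : (α ^ k) ^ ((1 : ℝ) / k) = α := by
    rw [← Real.rpow_natCast, ← Real.rpow_mul hα.le, mul_one_div_cancel (by positivity),
      Real.rpow_one]
  have hprod : ∀ p q : Fin n, 0 ≤ ∏ ℓ, A ℓ p q := fun p q =>
    Finset.prod_nonneg fun ℓ _ => ((hA ℓ).1 p q).le
  ext p q
  simp only [agg, rowMul, Matrix.of_apply]
  split_ifs
  · rw [Finset.prod_mul_distrib, Finset.prod_const, Finset.card_fin,
      Real.mul_rpow (by positivity) (hprod p q), hroot]
  · rw [Finset.prod_div_distrib, Finset.prod_const, Finset.card_fin,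
      Real.div_rpow (hprod p q) (by positivity), hroot]
  · rfl

noncomputable def rowMulPair (A : Matrix (Fin n) (Fin n) ℝ) (i j : Fin n) (α : ℝ) :
    Matrix (Fin n) (Fin n) ℝ :=
  rowMul (rowMul A i α) j α

theorem isPCM_rowMulPair {A : Matrix (Fin n) (Fin n) ℝ} (hA : IsPCM A) (i j : Fin n) {α : ℝ}
    (hα : 0 < α) : IsPCM (rowMulPair A i j α) :=
  isPCM_rowMul (isPCM_rowMul hA i hα) j hα

theorem agg_rowMulPair {k : ℕ} (hk : 0 < k) {A : Fin k → Matrix (Fin n) (Fin n) ℝ}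
    (hA : ∀ ℓ, IsPCM (A ℓ)) (i j : Fin n) {α : ℝ} (hα : 0 < α) :
    agg (fun ℓ => rowMulPair (A ℓ) i j α) = rowMulPair (agg A) i j α := by
  rw [rowMulPair, ← agg_rowMul hk hA i hα,
    ← agg_rowMul hk (fun ℓ => isPCM_rowMul (hA ℓ) i hα) j hα]
  rfl

def IsRowMulInvariant (f : Matrix (Fin n) (Fin n) ℝ → Fin n → ℝ) : Prop :=
  ∀ A, IsPCM A → ∀ i : Fin n, ∀ α : ℝ, 0 < α → ∀ j, j ≠ i →
    f (rowMul A i α) i / f (rowMul A i α) j = α * (f A i / f A j)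

namespace IsRowMulInvariant

variable {f : Matrix (Fin n) (Fin n) ℝ → Fin n → ℝ} {A : Matrix (Fin n) (Fin n) ℝ}
  {i j : Fin n} {α : ℝ}

theorem div_rowMul_self (hf : IsRowMulInvariant f) (hA : IsPCM A) (hα : 0 < α) (hj : j ≠ i) :
    f (rowMul A i α) j / f (rowMul A i α) i = α⁻¹ * (f A j / f A i) := by
  rw [← inv_div, hf A hA i α hα j hj, mul_inv, inv_div]

theorem div_rowMul_of_ne (hf : IsRowMulInvariant f) (hPos : ∀ A, IsPCM A → ∀ i, 0 < f A i)
    (hA : IsPCM A) (hα : 0 < α) {l l' : Fin n} (hl : l ≠ i) (hl' : l' ≠ i) :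
    f (rowMul A i α) l / f (rowMul A i α) l' = f A l / f A l' := by
  have hi : α * f A i ≠ 0 := (mul_pos hα (hPos A hA i)).ne'
  rw [← div_div_div_cancel_left' _ _ (hPos _ (isPCM_rowMul hA i hα) i).ne',
    hf A hA i α hα l' hl', hf A hA i α hα l hl, ← mul_div_assoc, ← mul_div_assoc,
    div_div_div_cancel_left' _ _ hi]

theorem div_rowMulPair (hf : IsRowMulInvariant f) (hA : IsPCM A) (hα : 0 < α) (hji : j ≠ i) :
    f (rowMulPair A i j α) j / f (rowMulPair A i j α) i = f A j / f A i := by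
  rw [rowMulPair, hf _ (isPCM_rowMul hA i hα) j α hα i hji.symm, div_rowMul_self hf hA hα hji,
    mul_inv_cancel_left₀ hα.ne']

theorem div_rowMulPair_of_ne (hf : IsRowMulInvariant f)
    (hPos : ∀ A, IsPCM A → ∀ i, 0 < f A i) (hA : IsPCM A) (hα : 0 < α) (hji : j ≠ i)
    {m : Fin n} (hmi : m ≠ i) (hmj : m ≠ j) :
    f (rowMulPair A i j α) m / f (rowMulPair A i j α) i = α⁻¹ * (f A m / f A i) := by
  rw [rowMulPair, div_rowMul_of_ne hf hPos (isPCM_rowMul hA i hα) hα hmj hji.symm,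
    div_rowMul_self hf hA hα hmi]

theorem rowMulPair_le_iff (hf : IsRowMulInvariant f) (hPos : ∀ A, IsPCM A → ∀ i, 0 < f A i)
    (hA : IsPCM A) (hα : 0 < α) (hji : j ≠ i) :
    f (rowMulPair A i j α) j ≤ f (rowMulPair A i j α) i ↔ f A j ≤ f A i := by
  rw [← div_le_one (hPos _ (isPCM_rowMulPair hA i j hα) i), hf.div_rowMulPair hA hα hji,
    div_le_one (hPos A hA i)]

theorem rowMulPair_lt_iff (hf : IsRowMulInvariant f) (hPos : ∀ A, IsPCM A → ∀ i, 0 < f A i)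
    (hA : IsPCM A) (hα : 0 < α) (hji : j ≠ i) :
    f (rowMulPair A i j α) j < f (rowMulPair A i j α) i ↔ f A j < f A i := by
  rw [← div_lt_one (hPos _ (isPCM_rowMulPair hA i j hα) i), hf.div_rowMulPair hA hα hji,
    div_lt_one (hPos A hA i)]

theorem rowMulPair_lt_of_div_lt (hf : IsRowMulInvariant f)
    (hPos : ∀ A, IsPCM A → ∀ i, 0 < f A i) (hA : IsPCM A) (hα : 0 < α) (hji : j ≠ i)
    {m : Fin n} (hmi : m ≠ i) (hmj : m ≠ j) (hm : f A m / f A i < α) :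
    f (rowMulPair A i j α) m < f (rowMulPair A i j α) i := by
  rwa [← div_lt_one (hPos _ (isPCM_rowMulPair hA i j hα) i),
    hf.div_rowMulPair_of_ne hPos hA hα hji hmi hmj, inv_mul_lt_iff₀ hα, mul_one]

end IsRowMulInvariant

variable {f : Matrix (Fin n) (Fin n) ℝ → Fin n → ℝ}

theorem AggregationInvariant.groupCoherent (hf : AggregationInvariant f) : GroupCoherent f :=
  fun k hk A hA i hle =>
    ⟨fun j => (hf k hk A hA i j fun ℓ => hle ℓ j).1,
      fun ⟨ℓ, hℓ⟩ j hji => (hf k hk A hA i j fun ℓ => hle ℓ j).2 ⟨ℓ, hℓ j hji⟩⟩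

theorem GroupCoherent.aggregationInvariant (hPos : ∀ A, IsPCM A → ∀ i, 0 < f A i)
    (hIRM : IsRowMulInvariant f) (hf : GroupCoherent f) : AggregationInvariant f := by
  intro k hk A hA i j hle
  rcases eq_or_ne j i with rfl | hji
  · exact ⟨le_rfl, fun ⟨_, h⟩ => (lt_irrefl _ h).elim⟩
  obtain ⟨M, hM⟩ := Finite.exists_le fun p : Fin k × Fin n => f (A p.1) p.2 / f (A p.1) i
  have hα : 0 < max M 0 + 1 := by positivity
  set α := max M 0 + 1
  have hdom : ∀ ℓ m, m ≠ i → m ≠ j →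
      f (rowMulPair (A ℓ) i j α) m < f (rowMulPair (A ℓ) i j α) i := fun ℓ m hmi hmj =>
    hIRM.rowMulPair_lt_of_div_lt hPos (hA ℓ) hα hji hmi hmj
      ((hM (ℓ, m)).trans_lt ((le_max_left M 0).trans_lt (lt_add_one _)))
  obtain ⟨hagg, haggStrict⟩ :=
    hf k hk _ (fun ℓ => isPCM_rowMulPair (hA ℓ) i j hα) i fun ℓ m => by
      rcases eq_or_ne m j with rfl | hmj
      · exact (hIRM.rowMulPair_le_iff hPos (hA ℓ) hα hji).2 (hle ℓ)
      rcases eq_or_ne m i with rfl | hmi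
      · exact le_rfl
      exact (hdom ℓ m hmi hmj).le
  rw [agg_rowMulPair hk hA i j hα] at hagg haggStrict
  refine ⟨(hIRM.rowMulPair_le_iff hPos (isPCM_agg hA) hα hji).1 (hagg j), fun ⟨ℓ, hℓ⟩ => ?_⟩
  refine (hIRM.rowMulPair_lt_iff hPos (isPCM_agg hA) hα hji).1
    (haggStrict ⟨ℓ, fun m hmi => ?_⟩ j hji)
  rcases eq_or_ne m j with rfl | hmj
  · exact (hIRM.rowMulPair_lt_iff hPos (hA ℓ) hα hji).2 hℓ
  · exact hdom ℓ m hmi hmj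

end

theorem aggInv_iff_groupCoherent_general {n : ℕ}
    (f : Matrix (Fin n) (Fin n) ℝ → Fin n → ℝ)
    (hPos : ∀ A, IsPCM A → ∀ i, 0 < f A i)
    (hIRM : ∀ A, IsPCM A → ∀ i : Fin n, ∀ α : ℝ, 0 < α → ∀ j, j ≠ i →
      f (rowMul A i α) i / f (rowMul A i α) j = α * (f A i / f A j)) :
    AggregationInvariant f ↔ GroupCoherent f :=
  ⟨AggregationInvariant.groupCoherent, GroupCoherent.aggregationInvariant hPos hIRM⟩

/-- For a weighting method that is invariant to row multiplication, aggregation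
invariance and group-coherence for choice are equivalent. -/
theorem aggInv_iff_groupCoherent {n : ℕ}
    (f : Matrix (Fin n) (Fin n) ℝ → Fin n → ℝ)
    (hPos : ∀ A, IsPCM A → ∀ i, 0 < f A i)
    (hSum : ∀ A, IsPCM A → ∑ i, f A i = 1)
    (hIRM : ∀ A, IsPCM A → ∀ i : Fin n, ∀ α : ℝ, 0 < α → ∀ j, j ≠ i →
      f (rowMul A i α) i / f (rowMul A i α) j = α * (f A i / f A j)) :
    AggregationInvariant f ↔ GroupCoherent f :=
  aggInv_iff_groupCoherent_general f hPos hIRM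
end

section
/- Let f be a weighting method on n×n pairwise comparison matrices that is invariant to row multiplication, let A be an n×n pairwise comparison matrix, and let i, j be distinct alternatives with f_i(A) ≥ f_j(A). Choose α > max{ f_m(A) : 1 ≤ m ≤ n } / f_i(A), and let Â be obtained from A by applying the transformation of row multiplication by α on i and then on j. Then f_i(Â)/f_j(Â) = f_i(A)/f_j(A) ≥ 1 and f_i(Â) ≥ f_m(Â) for all m = 1,…,n, i.e. alternative i attains the (weakly) largest weight in Â. -/
/-! Invariance to row multiplication forces `f (rowMul A i α)` to be proportional to `f A` with
the `i`-th weight multiplied by `α`. Multiplying rows `i` and `j` therefore scales both weights by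
`α` relative to all others: their ratio is unchanged, and since `α * f A i` exceeds every `f A m`,
alternative `i` ends up with the largest weight. -/

theorem IsPCM.rowMul {n : ℕ} {A : Matrix (Fin n) (Fin n) ℝ} (hA : IsPCM A)
    (i : Fin n) {α : ℝ} (hα : 0 < α) : IsPCM (rowMul A i α) := by
  obtain ⟨hpos, hrec⟩ := hA
  refine ⟨fun k l => ?_, fun k l => ?_⟩
  · have := hpos k l
    simp only [_root_.rowMul, Matrix.of_apply]
    split_ifs <;> positivity
  · have := (hpos k l).ne'
    simp only [_root_.rowMul, Matrix.of_apply, hrec k l]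
    split_ifs <;> first | rfl | tauto | field_simp

theorem exists_pos_eq_mul_update_of_div_eq {ι : Type*} [DecidableEq ι] {u v : ι → ℝ}
    (hu : ∀ k, 0 < u k) (hv : ∀ k, 0 < v k) {i : ι} {α : ℝ} (hα : 0 < α)
    (h : ∀ k, k ≠ i → v i / v k = α * (u i / u k)) :
    ∃ c > 0, ∀ k, v k = c * (Function.update (1 : ι → ℝ) i α k * u k) := by
  have hui := hu i
  refine ⟨v i / (α * u i), by have := hv i; positivity, fun k => ?_⟩
  rcases eq_or_ne k i with rfl | hk
  · simp only [Function.update_self]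
    field_simp
  · have hvk := hv k
    have huk := hu k
    have := h k hk
    simp only [Function.update_of_ne hk, Pi.one_apply, one_mul]
    field_simp at this ⊢
    linarith

theorem exists_pos_weight_rowMul_rowMul_eq {n : ℕ}
    {f : Matrix (Fin n) (Fin n) ℝ → Fin n → ℝ}
    (hPos : ∀ A, IsPCM A → ∀ i, 0 < f A i)
    (hIRM : ∀ A, IsPCM A → ∀ i : Fin n, ∀ α : ℝ, 0 < α → ∀ j, j ≠ i →
      f (rowMul A i α) i / f (rowMul A i α) j = α * (f A i / f A j))
    {A : Matrix (Fin n) (Fin n) ℝ} (hA : IsPCM A) {i j : Fin n} (hij : i ≠ j)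
    {α : ℝ} (hα : 0 < α) :
    ∃ c > 0, ∀ k,
      f (rowMul (rowMul A i α) j α) k = c * ((if k = i ∨ k = j then α else 1) * f A k) := by
  have hB := hA.rowMul i hα
  obtain ⟨c, hc, hfB⟩ := exists_pos_eq_mul_update_of_div_eq (hPos A hA) (hPos _ hB) hα
    (hIRM A hA i α hα)
  obtain ⟨d, hd, hfC⟩ := exists_pos_eq_mul_update_of_div_eq (hPos _ hB)
    (hPos _ (hB.rowMul j hα)) hα (hIRM _ hB j α hα)
  refine ⟨d * c, by positivity, fun k => ?_⟩
  rw [hfC, hfB]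
  rcases eq_or_ne k i with rfl | hki
  · simp only [Function.update_self, Function.update_of_ne hij, Pi.one_apply, true_or, if_true]
    ring
  rcases eq_or_ne k j with rfl | hkj
  · simp only [Function.update_self, Function.update_of_ne hki, Pi.one_apply, or_true, if_true]
    ring
  · simp only [Function.update_of_ne hki, Function.update_of_ne hkj, Pi.one_apply, hki, hkj,
      or_self, if_false]
    ring

theorem rowMul_makes_top_general {n : ℕ}
    (f : Matrix (Fin n) (Fin n) ℝ → Fin n → ℝ)
    (hPos : ∀ A, IsPCM A → ∀ i, 0 < f A i)
    (hIRM : ∀ A, IsPCM A → ∀ i : Fin n, ∀ α : ℝ, 0 < α → ∀ j, j ≠ i →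
      f (rowMul A i α) i / f (rowMul A i α) j = α * (f A i / f A j))
    (A : Matrix (Fin n) (Fin n) ℝ) (hA : IsPCM A)
    (i j : Fin n) (hij : i ≠ j) (hw : f A j ≤ f A i)
    (α : ℝ)
    (hα : (Finset.univ.sup' ⟨i, Finset.mem_univ i⟩ fun m => f A m) / f A i < α) :
    f (rowMul (rowMul A i α) j α) i / f (rowMul (rowMul A i α) j α) j =
        f A i / f A j ∧
      1 ≤ f A i / f A j ∧
      ∀ m, f (rowMul (rowMul A i α) j α) m ≤ f (rowMul (rowMul A i α) j α) i := by
  have hfi := hPos A hA i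
  have hlt : ∀ m, f A m < α * f A i := fun m =>
    (Finset.le_sup' (fun m => f A m) (Finset.mem_univ m)).trans_lt
      (by rwa [div_lt_iff₀ hfi] at hα)
  have hα0 : 0 < α := pos_of_mul_pos_left (hfi.trans (hlt i)) hfi.le
  obtain ⟨c, hc, hfC⟩ := exists_pos_weight_rowMul_rowMul_eq hPos hIRM hA hij hα0
  refine ⟨?_, (one_le_div (hPos A hA j)).2 hw, fun m => ?_⟩
  · rw [hfC, hfC]
    simp only [true_or, or_true, if_true]
    field_simp
  · rw [hfC, hfC, if_pos (Or.inl rfl)]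
    gcongr c * ?_
    split_ifs with hm
    · rcases hm with rfl | rfl
      exacts [le_rfl, by gcongr]
    · exact (one_mul (f A m)).trans_le (hlt m).le

/-- Let `f` be a weighting method invariant to row multiplication, `A` a pairwise
comparison matrix and `i ≠ j` alternatives with `f A i ≥ f A j`. If
`α > max_m f A m / f A i` and `Â` is obtained from `A` by row multiplication by `α`
on `i` and then on `j`, then `f Â i / f Â j = f A i / f A j ≥ 1` and alternative `i`
attains the weakly largest weight in `Â`. -/
theorem rowMul_makes_top {n : ℕ}
    (f : Matrix (Fin n) (Fin n) ℝ → Fin n → ℝ)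
    (hPos : ∀ A, IsPCM A → ∀ i, 0 < f A i)
    (hSum : ∀ A, IsPCM A → ∑ i, f A i = 1)
    (hIRM : ∀ A, IsPCM A → ∀ i : Fin n, ∀ α : ℝ, 0 < α → ∀ j, j ≠ i →
      f (rowMul A i α) i / f (rowMul A i α) j = α * (f A i / f A j))
    (A : Matrix (Fin n) (Fin n) ℝ) (hA : IsPCM A)
    (i j : Fin n) (hij : i ≠ j) (hw : f A j ≤ f A i)
    (α : ℝ)
    (hα : (Finset.univ.sup' ⟨i, Finset.mem_univ i⟩ fun m => f A m) / f A i < α) :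
    f (rowMul (rowMul A i α) j α) i / f (rowMul (rowMul A i α) j α) j =
        f A i / f A j ∧
      1 ≤ f A i / f A j ∧
      ∀ m, f (rowMul (rowMul A i α) j α) m ≤ f (rowMul (rowMul A i α) j α) i :=
  rowMul_makes_top_general f hPos hIRM A hA i j hij hw α hα
end
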